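/- arXiv:1407.7165 — 2 statements merged into one kernel-verified Lean document; each statement's English description precedes it below -/
import Mathlib

section
/- Let (X_n, Z_n), n = 1, 2, ..., be a sequence of pairs of real-valued random variables, where each X_n has support equal to a finite set 𝒳_n with 2 ≤ |𝒳_n| ≤ K for a constant K independent of n, and each Z_n has finite positive variance. Define Z̆_n = Z_n · V[Z_n]^{-1/2}, let m_n(x) = E[Z̆_n | X_n = x], and let ℳ_n = { m_n(x) : x ∈ 𝒳_n } ⊂ ℝ. Let ε*_n be one half of the minimum distance between any two distinct points of ℳ_n and ε* = inf_n ε*_n. Suppose: (1) ν(Z_n | X_n) → 0 as n → ∞; (2) each m_n is a one-to-one mapping from 𝒳_n into ℝ; and (3) ε* > 0. Then H(X_n | Z_n) → 0 as n → ∞, and consequently H(X_n) − I(X_n ; Z_n) → 0 as n → ∞. -/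
/-!
Decode `Zₙ` to the point `x ∈ 𝒳ₙ` whose conditional mean `mₙ x` lies within `ε*` of the
standardized output `Z̆ₙ`. By the separation of `ℳₙ`, decoding fails only where
`|Z̆ₙ - E[Z̆ₙ | Xₙ]| ≥ ε*`, which by Chebyshev has probability at most `ν(Zₙ|Xₙ) / ε*²`.
A Fano-type bound turns this into `H(Xₙ|Zₙ) ≤ 2K √(error probability)`: given `Zₙ = z` with
error probability `e`, each of the at most `K` terms `-p log p` is at most `2 √e`
(from `-p log p ≤ 2 √p`, and `-p log p ≤ 1 - p` for the decoded point), and Jensen for `√`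
handles the average over `z`.
-/

open MeasureTheory ProbabilityTheory Real Filter

/-- Conditional mean `E[Z | σ(X)]`. -/
noncomputable def condMean {Ω β : Type*} [MeasurableSpace Ω] [MeasurableSpace β]
    (μ : Measure Ω) (Z : Ω → ℝ) (X : Ω → β) : Ω → ℝ :=
  μ[Z | MeasurableSpace.comap X inferInstance]

/-- `ν(Z|X) = E{V[Z|X]}/V[Z] = E[(Z − E[Z|X])²] / V[Z]`. -/
noncomputable def nuScalar {Ω β : Type*} [MeasurableSpace Ω] [MeasurableSpace β]
    (μ : Measure Ω) (Z : Ω → ℝ) (X : Ω → β) : ℝ :=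
  (∫ ω, (Z ω - condMean μ Z X ω) ^ 2 ∂μ) / variance Z μ

/-- Discrete (Shannon) entropy of `X`, whose support is the finite set `S`. -/
noncomputable def finEntropy {Ω : Type*} [MeasurableSpace Ω] (μ : Measure Ω)
    (X : Ω → ℝ) (S : Finset ℝ) : ℝ :=
  ∑ x ∈ S, Real.negMulLog (μ (X ⁻¹' {x})).toReal

/-- Conditional entropy `H(X|Z)` of the finitely supported `X` given the real-valued `Z`,
defined via the regular conditional distribution of `X` given `Z`. -/
noncomputable def finCondEntropy {Ω : Type*} [MeasurableSpace Ω] (μ : Measure Ω)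
    [IsFiniteMeasure μ] (X Z : Ω → ℝ) (S : Finset ℝ) : ℝ :=
  ∫ z, ∑ x ∈ S, Real.negMulLog ((condDistrib X Z μ z) {x}).toReal ∂(Measure.map Z μ)

/-- Mutual information `I(X;Z) = H(X) − H(X|Z)` for finitely supported `X`. -/
noncomputable def finMutualInfo {Ω : Type*} [MeasurableSpace Ω] (μ : Measure Ω)
    [IsFiniteMeasure μ] (X Z : Ω → ℝ) (S : Finset ℝ) : ℝ :=
  finEntropy μ X S - finCondEntropy μ X Z S

open Finset

namespace Real

lemma negMulLog_le_two_mul_sqrt {p : ℝ} (hp : 0 ≤ p) : negMulLog p ≤ 2 * √p := by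
  rcases hp.eq_or_lt with rfl | hp
  · simp
  have hs : 0 < √p := sqrt_pos.2 hp
  have hlog := log_le_sub_one_of_pos (inv_pos.2 hs)
  rw [log_inv, log_sqrt hp.le] at hlog
  have hdiv : p * (√p)⁻¹ = √p := by rw [← div_eq_mul_inv, div_sqrt]
  calc negMulLog p = p * -log p := by rw [negMulLog]; ring
    _ ≤ p * (2 * ((√p)⁻¹ - 1)) := by gcongr; linarith
    _ = 2 * √p - 2 * p := by linear_combination 2 * hdiv
    _ ≤ 2 * √p := by linarith

end Real

lemma sum_negMulLog_measureReal_singleton_le {α : Type*} [MeasurableSpace α]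
    [MeasurableSingletonClass α] (ν : Measure α) [IsProbabilityMeasure ν] (S : Finset α) (a : α) :
    ∑ x ∈ S, negMulLog (ν.real {x}) ≤ 2 * #S * √(1 - ν.real {a}) := by
  have hterm : ∀ x ∈ S, negMulLog (ν.real {x}) ≤ 2 * √(1 - ν.real {a}) := by
    intro x _
    rcases eq_or_ne x a with rfl | hxa
    · have he : 0 ≤ 1 - ν.real {x} := sub_nonneg.2 measureReal_le_one
      calc negMulLog (ν.real {x}) ≤ 1 - ν.real {x} := negMulLog_le_one_sub_self measureReal_nonneg
        _ ≤ √(1 - ν.real {x}) := by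
          rw [Real.le_sqrt he he]; nlinarith [measureReal_nonneg (μ := ν) (s := {x})]
        _ ≤ 2 * √(1 - ν.real {x}) := by linarith [sqrt_nonneg (1 - ν.real {x})]
    · have hle : ν.real {x} + ν.real {a} ≤ 1 := by
        rw [← measureReal_union (Set.disjoint_singleton.2 hxa) (measurableSet_singleton a)]
        exact measureReal_le_one
      exact (negMulLog_le_two_mul_sqrt measureReal_nonneg).trans (by gcongr; linarith)
  calc ∑ x ∈ S, negMulLog (ν.real {x}) ≤ ∑ _x ∈ S, 2 * √(1 - ν.real {a}) := sum_le_sum hterm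
    _ = 2 * #S * √(1 - ν.real {a}) := by rw [sum_const, nsmul_eq_mul]; ring

lemma measurableSet_snd_eq_comp_fst {α β : Type*} [MeasurableSpace α] [MeasurableEq α]
    [MeasurableSpace β] {d : β → α} (hd : Measurable d) :
    MeasurableSet {p : β × α | p.2 = d p.1} :=
  measurableSet_eq_fun measurable_snd (hd.comp measurable_fst)

section CondDistrib

variable {Ω α β : Type*} [MeasurableSpace Ω] [MeasurableSpace α] [StandardBorelSpace α]
  [Nonempty α] [MeasurableSpace β] {μ : Measure Ω} [IsFiniteMeasure μ] {X : Ω → α} {Z : Ω → β}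
  {d : β → α}

lemma measurable_condDistrib_apply_singleton (hd : Measurable d) :
    Measurable fun z => condDistrib X Z μ z {d z} :=
  Kernel.measurable_kernel_prodMk_left (measurableSet_snd_eq_comp_fst hd)

lemma integral_condDistrib_singleton_eq (hX : Measurable X) (hZ : Measurable Z)
    (hd : Measurable d) :
    ∫ z, (condDistrib X Z μ z).real {d z} ∂(μ.map Z) = μ.real {ω | X ω = d (Z ω)} := by
  have hT := measurableSet_snd_eq_comp_fst hd
  have hlin : ∫⁻ z, condDistrib X Z μ z {d z} ∂(μ.map Z) = μ {ω | X ω = d (Z ω)} := by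
    have := Measure.compProd_apply (μ := μ.map Z) (κ := condDistrib X Z μ) hT
    rw [compProd_map_condDistrib hX.aemeasurable, Measure.map_apply (hZ.prodMk hX) hT] at this
    exact this.symm
  simp only [measureReal_def]
  rw [integral_toReal (measurable_condDistrib_apply_singleton hd).aemeasurable
    (ae_of_all _ fun z => measure_lt_top _ _), hlin]

end CondDistrib

section Fano

variable {Ω : Type*} [MeasurableSpace Ω] {μ : Measure Ω} [IsProbabilityMeasure μ] {X Z : Ω → ℝ}

lemma finCondEntropy_nonneg (S : Finset ℝ) : 0 ≤ finCondEntropy μ X Z S :=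
  integral_nonneg fun _ => sum_nonneg fun _ _ =>
    negMulLog_nonneg ENNReal.toReal_nonneg measureReal_le_one

lemma finCondEntropy_le_two_mul_card_mul_sqrt (hX : Measurable X) (hZ : Measurable Z)
    (S : Finset ℝ) {d : ℝ → ℝ} (hd : Measurable d) :
    finCondEntropy μ X Z S ≤ 2 * #S * √(μ.real {ω | X ω ≠ d (Z ω)}) := by
  have : IsProbabilityMeasure (μ.map Z) := Measure.isProbabilityMeasure_map hZ.aemeasurable
  set e : ℝ → ℝ := fun z => 1 - (condDistrib X Z μ z).real {d z}
  have hp_meas : Measurable fun z => (condDistrib X Z μ z).real {d z} :=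
    (measurable_condDistrib_apply_singleton hd).ennreal_toReal
  have hp_int : Integrable (fun z => (condDistrib X Z μ z).real {d z}) (μ.map Z) :=
    .of_bound hp_meas.aestronglyMeasurable 1 (ae_of_all _ fun z => by
      rw [Real.norm_eq_abs, abs_of_nonneg measureReal_nonneg]; exact measureReal_le_one)
  have he_nonneg : ∀ z, 0 ≤ e z := fun z => sub_nonneg.2 measureReal_le_one
  have hsqrt_int : Integrable (fun z => √(e z)) (μ.map Z) :=
    .of_bound (measurable_const.sub hp_meas).sqrt.aestronglyMeasurable 1 (ae_of_all _ fun z => by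
      rw [Real.norm_eq_abs, abs_of_nonneg (sqrt_nonneg _)]
      exact sqrt_le_one.2 (sub_le_self _ measureReal_nonneg))
  have he_integral : ∫ z, e z ∂(μ.map Z) = μ.real {ω | X ω ≠ d (Z ω)} := by
    rw [integral_sub (integrable_const 1) hp_int, integral_const,
      integral_condDistrib_singleton_eq hX hZ hd, probReal_univ, smul_eq_mul, mul_one,
      ← probReal_compl_eq_one_sub (measurableSet_eq_fun (g := fun ω => d (Z ω)) hX (by fun_prop))]
    rfl
  calc finCondEntropy μ X Z S ≤ ∫ z, 2 * #S * √(e z) ∂(μ.map Z) :=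
        integral_mono_of_nonneg (ae_of_all _ fun _ => sum_nonneg fun _ _ =>
            negMulLog_nonneg ENNReal.toReal_nonneg measureReal_le_one)
          (hsqrt_int.const_mul _)
          (ae_of_all _ fun z => sum_negMulLog_measureReal_singleton_le _ S (d z))
    _ = 2 * #S * ∫ z, √(e z) ∂(μ.map Z) := integral_const_mul _ _
    _ ≤ 2 * #S * √(∫ z, e z ∂(μ.map Z)) := by
        gcongr
        exact strictConcaveOn_sqrt.concaveOn.le_map_integral continuous_sqrt.continuousOn
          isClosed_Ici (ae_of_all _ he_nonneg) ((integrable_const 1).sub hp_int) hsqrt_int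
    _ = 2 * #S * √(μ.real {ω | X ω ≠ d (Z ω)}) := by rw [he_integral]

end Fano

-- When the points `m x`, `x ∈ S`, are `2ε`-separated, at most one summand is nonzero.
noncomputable def ballDecoder (S : Finset ℝ) (m : ℝ → ℝ) (ε t : ℝ) : ℝ :=
  ∑ x ∈ S, if |t - m x| < ε then x else 0

lemma measurable_ballDecoder (S : Finset ℝ) (m : ℝ → ℝ) (ε : ℝ) :
    Measurable (ballDecoder S m ε) :=
  Finset.measurable_sum _ fun _ _ =>
    Measurable.ite (measurableSet_lt (by fun_prop) measurable_const) measurable_const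
      measurable_const

lemma ballDecoder_eq {S : Finset ℝ} {m : ℝ → ℝ} {ε t x : ℝ}
    (hsep : ∀ x ∈ S, ∀ y ∈ S, x ≠ y → 2 * ε ≤ |m x - m y|) (hx : x ∈ S) (ht : |t - m x| < ε) :
    ballDecoder S m ε t = x := by
  rw [ballDecoder, sum_eq_single_of_mem x hx (fun y hy hyx => if_neg fun hty => ?_), if_pos ht]
  have := hsep x hx y hy hyx.symm
  have := abs_sub_le (m x) t (m y)
  rw [abs_sub_comm] at ht
  linarith

section Chebyshev

variable {Ω β : Type*} [MeasurableSpace Ω] [MeasurableSpace β] {μ : Measure Ω}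

lemma measureReal_le_abs_le_integral_sq_div [IsFiniteMeasure μ] {f : Ω → ℝ} (hf : MemLp f 2 μ)
    {ε : ℝ} (hε : 0 < ε) :
    μ.real {ω | ε ≤ |f ω|} ≤ (∫ ω, f ω ^ 2 ∂μ) / ε ^ 2 := by
  have hset : {ω | ε ≤ |f ω|} = {ω | ε ^ 2 ≤ f ω ^ 2} := by
    ext ω
    show ε ≤ |f ω| ↔ ε ^ 2 ≤ f ω ^ 2
    rw [sq_le_sq, abs_of_pos hε]
  rw [le_div_iff₀ (by positivity), mul_comm, hset]
  exact mul_meas_ge_le_integral_of_nonneg (ae_of_all _ fun ω => sq_nonneg (f ω))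
    hf.integrable_sq (ε ^ 2)

lemma integral_sq_sub_condMean_div_sqrt_variance (Z : Ω → ℝ) (X : Ω → β) :
    ∫ ω, (Z ω / √(variance Z μ) - condMean μ (fun ω => Z ω / √(variance Z μ)) X ω) ^ 2 ∂μ
      = nuScalar μ Z X := by
  set c := √(variance Z μ)
  have hcond : condMean μ (fun ω => Z ω / c) X =ᵐ[μ] fun ω => c⁻¹ * condMean μ Z X ω := by
    have : (fun ω => Z ω / c) = c⁻¹ • Z := by ext ω; simp [div_eq_inv_mul]
    rw [condMean, this]
    exact condExp_smul _ _ _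
  rw [nuScalar, ← integral_div]
  refine integral_congr_ae (hcond.mono fun ω hω => ?_)
  have hv : variance Z μ = c ^ 2 := (sq_sqrt (variance_nonneg Z μ)).symm
  simp only [hω, hv]
  ring

lemma measureReal_ne_ballDecoder_le [IsFiniteMeasure μ] {X Z : Ω → ℝ} {S : Finset ℝ}
    {m : ℝ → ℝ} {ε : ℝ} (hε : 0 < ε) (hsep : ∀ x ∈ S, ∀ y ∈ S, x ≠ y → 2 * ε ≤ |m x - m y|)
    (hXS : ∀ᵐ ω ∂μ, X ω ∈ S) (hZ : MemLp Z 2 μ)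
    (hm : (fun ω => m (X ω)) =ᵐ[μ] condMean μ (fun ω => Z ω / √(variance Z μ)) X) :
    μ.real {ω | X ω ≠ ballDecoder S m ε (Z ω / √(variance Z μ))} ≤ nuScalar μ Z X / ε ^ 2 := by
  set Y := fun ω => Z ω / √(variance Z μ)
  have hY : MemLp Y 2 μ := by simpa only [Y, div_eq_mul_inv] using hZ.mul_const _
  have hW : MemLp (fun ω => Y ω - condMean μ Y X ω) 2 μ := hY.sub (hY.condExp one_le_two)
  have herr : {ω | X ω ≠ ballDecoder S m ε (Y ω)} ≤ᵐ[μ] {ω | ε ≤ |Y ω - condMean μ Y X ω|} := by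
    filter_upwards [hXS, hm] with ω hS hmω hne
    by_contra hlt
    exact hne (ballDecoder_eq hsep hS (by rw [hmω]; exact lt_of_not_ge hlt)).symm
  calc μ.real {ω | X ω ≠ ballDecoder S m ε (Y ω)}
      ≤ μ.real {ω | ε ≤ |Y ω - condMean μ Y X ω|} :=
        ENNReal.toReal_mono (measure_ne_top _ _) (measure_mono_ae herr)
    _ ≤ (∫ ω, (Y ω - condMean μ Y X ω) ^ 2 ∂μ) / ε ^ 2 :=
        measureReal_le_abs_le_integral_sq_div hW hε
    _ = nuScalar μ Z X / ε ^ 2 := by rw [integral_sq_sub_condMean_div_sqrt_variance]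

end Chebyshev

theorem stmt_0_general
    {Ω : Type*} [MeasurableSpace Ω] (μ : Measure Ω) [IsProbabilityMeasure μ]
    (X Z : ℕ → Ω → ℝ) (S : ℕ → Finset ℝ) (K : ℕ)
    (m : ℕ → ℝ → ℝ)
    (hXmeas : ∀ n, Measurable (X n)) (hZmeas : ∀ n, Measurable (Z n))
    -- the support of `Xₙ` is the finite set `𝒳ₙ = S n`, with `2 ≤ |𝒳ₙ| ≤ K`
    (hK : ∀ n, (S n).card ≤ K)
    (hsupp : ∀ n, μ (X n ⁻¹' ↑(S n)) = 1)
    -- `Zₙ` has finite positive variance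
    (hZL2 : ∀ n, MemLp (Z n) 2 μ)
    -- `mₙ(x) = E[Z̆ₙ | Xₙ = x]` where `Z̆ₙ = Zₙ · V[Zₙ]^{-1/2}`:
    -- `mₙ ∘ Xₙ` is a version of the conditional expectation of `Z̆ₙ` given `σ(Xₙ)`
    (hm : ∀ n, (fun ω => m n (X n ω)) =ᵐ[μ]
      condMean μ (fun ω => Z n ω / Real.sqrt (variance (Z n) μ)) (X n))
    -- condition (1): `ν(Zₙ|Xₙ) → 0`
    (hnu : Tendsto (fun n => nuScalar μ (Z n) (X n)) atTop (nhds 0))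
    -- condition (3): `ε* = inf_n ε*ₙ > 0`, i.e. any two distinct points of
    -- `ℳₙ = mₙ(𝒳ₙ)` are separated by at least `2 ε*`
    (hsep : ∃ ε : ℝ, 0 < ε ∧ ∀ n, ∀ x ∈ S n, ∀ y ∈ S n, x ≠ y →
      2 * ε ≤ |m n x - m n y|) :
    Tendsto (fun n => finCondEntropy μ (X n) (Z n) (S n)) atTop (nhds 0) ∧
    Tendsto (fun n => finEntropy μ (X n) (S n) - finMutualInfo μ (X n) (Z n) (S n))
      atTop (nhds 0) := by
  obtain ⟨ε, hε, hsep⟩ := hsep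
  set d : ℕ → ℝ → ℝ := fun n z => ballDecoder (S n) (m n) ε (z / √(variance (Z n) μ))
  set q : ℕ → ℝ := fun n => μ.real {ω | X n ω ≠ d n (Z n ω)}
  have hXS : ∀ n, ∀ᵐ ω ∂μ, X n ω ∈ S n := fun n =>
    (ae_iff_measure_eq ((hXmeas n) (S n).measurableSet).nullMeasurableSet).2
      ((hsupp n).trans measure_univ.symm)
  have hq : Tendsto q atTop (nhds 0) :=
    squeeze_zero (fun _ => measureReal_nonneg)
      (fun n => measureReal_ne_ballDecoder_le hε (hsep n) (hXS n) (hZL2 n) (hm n))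
      (by simpa using hnu.div_const (ε ^ 2))
  have hH : Tendsto (fun n => finCondEntropy μ (X n) (Z n) (S n)) atTop (nhds 0) := by
    refine squeeze_zero (fun n => finCondEntropy_nonneg (S n)) (fun n => ?_)
      (by simpa using (hq.sqrt.const_mul (2 * K : ℝ)))
    calc finCondEntropy μ (X n) (Z n) (S n) ≤ 2 * #(S n) * √(q n) :=
          finCondEntropy_le_two_mul_card_mul_sqrt (hXmeas n) (hZmeas n) (S n)
            ((measurable_ballDecoder _ _ _).comp (measurable_id.div_const _))
      _ ≤ 2 * K * √(q n) := by gcongr; exact hK n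
  exact ⟨hH, hH.congr fun n => by simp [finMutualInfo]⟩

/-- Theorem 1 of the paper. If `ν(Zₙ|Xₙ) → 0`, the conditional mean
functions `mₙ(x) = E[Z̆ₙ | Xₙ = x]` of the standardized outputs `Z̆ₙ = Zₙ · V[Zₙ]^{-1/2}`
are one-to-one on the finite supports `𝒳ₙ`, and the points of the supports
`ℳₙ = mₙ(𝒳ₙ)` are uniformly separated (`ε* > 0`), then `H(Xₙ|Zₙ) → 0` and hence
`H(Xₙ) − I(Xₙ;Zₙ) → 0`. -/
theorem stmt_0
    {Ω : Type*} [MeasurableSpace Ω] (μ : Measure Ω) [IsProbabilityMeasure μ]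
    (X Z : ℕ → Ω → ℝ) (S : ℕ → Finset ℝ) (K : ℕ)
    (m : ℕ → ℝ → ℝ)
    (hXmeas : ∀ n, Measurable (X n)) (hZmeas : ∀ n, Measurable (Z n))
    -- the support of `Xₙ` is the finite set `𝒳ₙ = S n`, with `2 ≤ |𝒳ₙ| ≤ K`
    (hcard : ∀ n, 2 ≤ (S n).card) (hK : ∀ n, (S n).card ≤ K)
    (hsupp : ∀ n, μ (X n ⁻¹' ↑(S n)) = 1)
    (hatom : ∀ n, ∀ x ∈ S n, μ (X n ⁻¹' {x}) ≠ 0)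
    -- `Zₙ` has finite positive variance
    (hZL2 : ∀ n, MemLp (Z n) 2 μ) (hZvar : ∀ n, 0 < variance (Z n) μ)
    -- `mₙ(x) = E[Z̆ₙ | Xₙ = x]` where `Z̆ₙ = Zₙ · V[Zₙ]^{-1/2}`:
    -- `mₙ ∘ Xₙ` is a version of the conditional expectation of `Z̆ₙ` given `σ(Xₙ)`
    (hm : ∀ n, (fun ω => m n (X n ω)) =ᵐ[μ]
      condMean μ (fun ω => Z n ω / Real.sqrt (variance (Z n) μ)) (X n))
    -- condition (1): `ν(Zₙ|Xₙ) → 0`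
    (hnu : Tendsto (fun n => nuScalar μ (Z n) (X n)) atTop (nhds 0))
    -- condition (2): each `mₙ` is one-to-one on `𝒳ₙ`
    (hinj : ∀ n, Set.InjOn (m n) ↑(S n))
    -- condition (3): `ε* = inf_n ε*ₙ > 0`, i.e. any two distinct points of
    -- `ℳₙ = mₙ(𝒳ₙ)` are separated by at least `2 ε*`
    (hsep : ∃ ε : ℝ, 0 < ε ∧ ∀ n, ∀ x ∈ S n, ∀ y ∈ S n, x ≠ y →
      2 * ε ≤ |m n x - m n y|) :
    Tendsto (fun n => finCondEntropy μ (X n) (Z n) (S n)) atTop (nhds 0) ∧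
    Tendsto (fun n => finEntropy μ (X n) (S n) - finMutualInfo μ (X n) (Z n) (S n))
      atTop (nhds 0) :=
  stmt_0_general μ X Z S K m hXmeas hZmeas hK hsupp hZL2 hm hnu hsep
end

section
/- Let (X_n, Z_n), n = 1, 2, ..., be a sequence of pairs of real-valued random variables such that both X_n and Z_n have finite supports (each of cardinality at least 2, bounded above by a constant independent of n, with finite positive variances), and such that the standardized supports of both X_n · V[X_n]^{-1/2} and Z_n · V[Z_n]^{-1/2} have pairwise separations uniformly bounded below by a positive constant, and the conditional mean functions E[Z_n V[Z_n]^{-1/2} | X_n = x] are one-to-one on the support of X_n. Then at least one of the following holds: (a) H(X_n) − H(Z_n) → 0 as n → ∞, or (b) ν(X_n | Z_n) and ν(Z_n | X_n) do not both converge to zero as n → ∞. -/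
/-!
If `ν(X|Z)` is small, Markov's inequality confines `X` to within `ε √V[X]` of `E[X|Z]` outside
an event of probability at most `ν(X|Z)/ε²`. As `E[X|Z]` is a function of `Z` and the support of
`X` is `2ε √V[X]`-separated, off that event `X` is recovered from `Z` by rounding `E[X|Z]` to the
support. A Fano-type argument then bounds `H(X) - H(Z)` by `|supp X| (p + 2√p)` with
`p = ν(X|Z)/ε²`: the image of `Z` under the decoder has entropy at most `H(Z)`, its law differs
from that of `X` by at most `p` at every point, and `t + 2√t` is a modulus of continuity of
`negMulLog` on `[0, 1]`. With `|supp| ≤ K` and the roles of `X` and `Z` exchanged, both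
one-sided gaps tend to zero when both `ν`'s do.
-/

open MeasureTheory ProbabilityTheory Real Filter

namespace Real

lemma negMulLog_add_le {a b : ℝ} (ha : 0 ≤ a) (hb : 0 ≤ b) :
    negMulLog (a + b) ≤ negMulLog a + negMulLog b := by
  rcases ha.eq_or_lt with rfl | ha
  · simp
  rcases hb.eq_or_lt with rfl | hb
  · simp
  have hla : log a ≤ log (a + b) := log_le_log ha (by linarith)
  have hlb : log b ≤ log (a + b) := log_le_log hb (by linarith)
  simp only [negMulLog, neg_mul, add_mul]
  nlinarith [mul_le_mul_of_nonneg_left hla ha.le, mul_le_mul_of_nonneg_left hlb hb.le]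

lemma negMulLog_sum_le {ι : Type*} (s : Finset ι) {a : ι → ℝ} (ha : ∀ i ∈ s, 0 ≤ a i) :
    negMulLog (∑ i ∈ s, a i) ≤ ∑ i ∈ s, negMulLog (a i) :=
  Finset.le_sum_of_subadditive_on_pred negMulLog (0 ≤ ·) (by simp)
    (fun _ _ => negMulLog_add_le) (fun _ _ => add_nonneg) a ha

lemma negMulLog_le_two_mul_sqrt_s2 {t : ℝ} (ht : 0 ≤ t) : negMulLog t ≤ 2 * √t := by
  rcases ht.eq_or_lt with rfl | ht
  · simp
  have hs : 0 < √t := sqrt_pos.2 ht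
  -- `-log t = 2 log (√t)⁻¹ ≤ 2 ((√t)⁻¹ - 1)`
  have hlog : -log t ≤ 2 * (√t)⁻¹ := by
    have := log_le_sub_one_of_pos (inv_pos.2 hs)
    rw [log_inv, log_sqrt ht.le] at this
    linarith
  calc negMulLog t = t * -log t := by simp [negMulLog]
    _ ≤ t * (2 * (√t)⁻¹) := by gcongr
    _ = 2 * (t / √t) := by ring
    _ = 2 * √t := by rw [div_sqrt]

lemma negMulLog_sub_le_sub_of_le {a b : ℝ} (ha : 0 ≤ a) (hab : a ≤ b) (hb : b ≤ 1) :
    negMulLog a - negMulLog b ≤ b - a := by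
  rcases ha.eq_or_lt with rfl | ha
  · linarith [negMulLog_nonneg (ha.trans hab) hb, negMulLog_zero]
  have hb0 : 0 < b := ha.trans_le hab
  -- `negMulLog a - negMulLog b = a log (b / a) + (b - a) log b`
  have hlog : a * log (b / a) ≤ b - a := by
    have := mul_le_mul_of_nonneg_left (log_le_sub_one_of_pos (div_pos hb0 ha)) ha.le
    rwa [mul_sub, mul_div_cancel₀ _ ha.ne', mul_one] at this
  have hlb : (b - a) * log b ≤ 0 :=
    mul_nonpos_of_nonneg_of_nonpos (by linarith) (log_nonpos hb0.le hb)
  rw [log_div hb0.ne' ha.ne'] at hlog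
  simp only [negMulLog]
  nlinarith

lemma negMulLog_sub_le {a b t : ℝ} (ha : 0 ≤ a) (hb : 0 ≤ b) (hb1 : b ≤ 1) (hab : |a - b| ≤ t) :
    negMulLog a - negMulLog b ≤ t + 2 * √t := by
  have ht : 0 ≤ √t := sqrt_nonneg t
  rcases le_total a b with h | h
  · have := negMulLog_sub_le_sub_of_le ha h hb1
    linarith [neg_abs_le (a - b)]
  · have hd : 0 ≤ a - b := sub_nonneg.2 h
    have hadd := negMulLog_add_le hb hd
    have hsqrt := negMulLog_le_two_mul_sqrt_s2 hd
    have hmono : √(a - b) ≤ √t := sqrt_le_sqrt ((le_abs_self _).trans hab)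
    rw [add_sub_cancel] at hadd
    linarith [abs_nonneg (a - b)]

end Real

namespace Finset

open Real

variable {α β : Type*} [DecidableEq α] (S : Finset α) (T : Finset β) (f : β → α)

lemma sum_negMulLog_sum_fiberwise_le {p : β → ℝ} (hp : ∀ z ∈ T, 0 ≤ p z)
    (hf : ∀ z ∈ T, f z ∈ S) :
    ∑ x ∈ S, negMulLog (∑ z ∈ T with f z = x, p z) ≤ ∑ z ∈ T, negMulLog (p z) :=
  calc ∑ x ∈ S, negMulLog (∑ z ∈ T with f z = x, p z)
      ≤ ∑ x ∈ S, ∑ z ∈ T with f z = x, negMulLog (p z) :=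
        sum_le_sum fun _ _ => negMulLog_sum_le _ fun z hz => hp z (mem_filter.1 hz).1
    _ = ∑ z ∈ T, negMulLog (p z) := sum_fiberwise_of_maps_to hf _

variable {J : α → β → ℝ}

lemma abs_sum_sub_sum_fiberwise_le (hJ : ∀ x ∈ S, ∀ z ∈ T, 0 ≤ J x z) {x : α} (hx : x ∈ S) :
    |∑ z ∈ T, J x z - ∑ z ∈ T with f z = x, ∑ x' ∈ S, J x' z| ≤
      ∑ z ∈ T, ∑ x' ∈ S.erase (f z), J x' z := by
  set e : β → ℝ := fun z => ∑ x' ∈ S.erase (f z), J x' z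
  have he : ∀ z ∈ T, 0 ≤ e z := fun z hz =>
    sum_nonneg fun x' hx' => hJ x' (mem_of_mem_erase hx') z hz
  have hsub : ∀ p : β → Prop, [DecidablePred p] → ∑ z ∈ T with p z, e z ≤ ∑ z ∈ T, e z :=
    fun p _ => sum_le_sum_of_subset_of_nonneg (filter_subset _ _) fun z hz _ => he z hz
  rw [abs_sub_le_iff, ← sum_filter_add_sum_filter_not T (f · = x) (J x)]
  constructor
  · have hdecoded : ∑ z ∈ T with f z = x, J x z ≤ ∑ z ∈ T with f z = x, ∑ x' ∈ S, J x' z :=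
      sum_le_sum fun z hz => single_le_sum (fun x' hx' => hJ x' hx' z (mem_filter.1 hz).1) hx
    have hmissed : ∑ z ∈ T with ¬f z = x, J x z ≤ ∑ z ∈ T with ¬f z = x, e z :=
      sum_le_sum fun z hz => single_le_sum (fun x' hx' => hJ x' (mem_of_mem_erase hx') z
        (mem_filter.1 hz).1) (mem_erase.2 ⟨Ne.symm (mem_filter.1 hz).2, hx⟩)
    linarith [hsub (¬f · = x)]
  · have hsplit : ∑ z ∈ T with f z = x, ∑ x' ∈ S, J x' z =
        ∑ z ∈ T with f z = x, J x z + ∑ z ∈ T with f z = x, e z := by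
      rw [← sum_add_distrib]
      refine sum_congr rfl fun z hz => ?_
      simp only [e, (mem_filter.1 hz).2]
      exact (add_sum_erase _ _ hx).symm
    have hnonneg : 0 ≤ ∑ z ∈ T with ¬f z = x, J x z :=
      sum_nonneg fun z hz => hJ x hx z (mem_filter.1 hz).1
    linarith [hsub (f · = x)]

theorem sum_negMulLog_sub_sum_negMulLog_le (hJ : ∀ x ∈ S, ∀ z ∈ T, 0 ≤ J x z)
    (hJ1 : ∑ x ∈ S, ∑ z ∈ T, J x z ≤ 1) (hf : ∀ z ∈ T, f z ∈ S) :
    ∑ x ∈ S, negMulLog (∑ z ∈ T, J x z) - ∑ z ∈ T, negMulLog (∑ x ∈ S, J x z) ≤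
      #S * ((∑ z ∈ T, ∑ x ∈ S.erase (f z), J x z) +
        2 * √(∑ z ∈ T, ∑ x ∈ S.erase (f z), J x z)) := by
  set D := ∑ z ∈ T, ∑ x ∈ S.erase (f z), J x z
  have hpz : ∀ z ∈ T, 0 ≤ ∑ x ∈ S, J x z := fun z hz => sum_nonneg fun x hx => hJ x hx z hz
  have hfiber : ∀ x ∈ S, negMulLog (∑ z ∈ T, J x z) ≤
      negMulLog (∑ z ∈ T with f z = x, ∑ x' ∈ S, J x' z) + (D + 2 * √D) := by
    intro x hx
    have hle1 : ∑ z ∈ T with f z = x, ∑ x' ∈ S, J x' z ≤ 1 := by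
      refine le_trans ?_ (sum_comm (f := fun x z => J x z) ▸ hJ1)
      exact sum_le_sum_of_subset_of_nonneg (filter_subset _ _) fun z hz _ => hpz z hz
    have := negMulLog_sub_le (sum_nonneg fun z hz => hJ x hx z hz)
      (sum_nonneg fun z hz => hpz z (mem_filter.1 hz).1) hle1
      (abs_sum_sub_sum_fiberwise_le S T f hJ hx)
    linarith
  have hent := sum_negMulLog_sum_fiberwise_le S T f hpz hf
  have := sum_le_sum hfiber
  rw [sum_add_distrib, sum_const, nsmul_eq_mul] at this
  linarith

end Finset

lemma exists_decoder_of_separated {E β : Type*} [PseudoMetricSpace E] {S : Set E}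
    (hS : S.Nonempty) {δ : ℝ} (hsep : ∀ x ∈ S, ∀ y ∈ S, x ≠ y → 2 * δ ≤ dist x y) (g : β → E) :
    ∃ f : β → E, (∀ z, f z ∈ S) ∧ ∀ z, ∀ x ∈ S, dist x (g z) < δ → f z = x := by
  have hunique : ∀ z, ∃ x₀ ∈ S, ∀ x ∈ S, dist x (g z) < δ → x = x₀ := by
    intro z
    by_cases h : ∃ x₀ ∈ S, dist x₀ (g z) < δ
    · obtain ⟨x₀, hx₀, hd₀⟩ := h
      refine ⟨x₀, hx₀, fun x hx hd => by_contra fun hne => ?_⟩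
      linarith [hsep x hx x₀ hx₀ hne, dist_triangle_right x x₀ (g z)]
    · push Not at h
      obtain ⟨x₀, hx₀⟩ := hS
      exact ⟨x₀, hx₀, fun x hx hd => absurd hd (not_lt.2 (h x hx))⟩
  choose f hfS hf using hunique
  exact ⟨f, hfS, fun z x hx hd => (hf z x hx hd).symm⟩

section Measure

open Finset

variable {Ω : Type*} [MeasurableSpace Ω] {μ : Measure Ω}

lemma sum_measureReal_preimage_singleton_inter [IsFiniteMeasure μ] {γ : Type*}
    [MeasurableSpace γ] [MeasurableSingletonClass γ] {W : Ω → γ} (hW : Measurable W)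
    (U : Finset γ) (A : Set Ω) :
    ∑ u ∈ U, μ.real (W ⁻¹' {u} ∩ A) = μ.real (W ⁻¹' U ∩ A) := by
  simpa [measureReal_restrict_apply (hW (measurableSet_singleton _)),
    measureReal_restrict_apply (hW U.measurableSet)] using
    sum_measureReal_preimage_singleton (μ := μ.restrict A) U fun u _ =>
      hW (measurableSet_singleton u)

lemma sum_measureReal_inter_preimage_singleton [IsProbabilityMeasure μ] {γ : Type*}
    [MeasurableSpace γ] [MeasurableSingletonClass γ] {W : Ω → γ} (hW : Measurable W)
    {U : Finset γ} (hU : μ (W ⁻¹' U) = 1) (A : Set Ω) :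
    ∑ u ∈ U, μ.real (A ∩ W ⁻¹' {u}) = μ.real A := by
  simp_rw [Set.inter_comm A, sum_measureReal_preimage_singleton_inter hW]
  rw [Set.inter_comm, measureReal_def,
    measure_inter_conull ((prob_compl_eq_zero_iff (hW U.measurableSet)).2 hU), measureReal_def]

lemma exists_condMean_eq_comp {β : Type*} [MeasurableSpace β] (μ : Measure Ω) (X : Ω → ℝ)
    (Z : Ω → β) : ∃ g : β → ℝ, condMean μ X Z = g ∘ Z := by
  obtain ⟨g, -, hg⟩ := (stronglyMeasurable_condExp (m := MeasurableSpace.comap Z inferInstance)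
    (μ := μ) (f := X)).exists_eq_measurable_comp
  exact ⟨g, hg⟩

lemma nuScalar_nonneg {β : Type*} [MeasurableSpace β] (μ : Measure Ω) (X : Ω → ℝ) (Z : Ω → β) :
    0 ≤ nuScalar μ X Z :=
  div_nonneg (integral_nonneg fun _ => sq_nonneg _) (variance_nonneg _ _)

lemma measureReal_le_nuScalar_div [IsProbabilityMeasure μ] {β : Type*} [MeasurableSpace β]
    {X : Ω → ℝ} (Z : Ω → β) (hX : MemLp X 2 μ) (hvar : 0 < variance X μ) {ε : ℝ}
    (hε : 0 < ε) :
    μ.real {ω | ε ^ 2 * variance X μ ≤ (X ω - condMean μ X Z ω) ^ 2} ≤ nuScalar μ X Z / ε ^ 2 := by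
  have hint : Integrable (fun ω => (X ω - condMean μ X Z ω) ^ 2) μ :=
    (hX.sub (hX.condExp one_le_two)).integrable_sq
  have hmarkov := mul_meas_ge_le_integral_of_nonneg (ae_of_all _ fun ω => sq_nonneg _) hint
    (ε ^ 2 * variance X μ)
  rw [nuScalar, div_div, le_div_iff₀ (by positivity)]
  linarith

theorem finEntropy_sub_le_of_decoder [IsProbabilityMeasure μ] {X Z : Ω → ℝ} {S T : Finset ℝ}
    (hX : Measurable X) (hZ : Measurable Z) (hS : μ (X ⁻¹' S) = 1) (hT : μ (Z ⁻¹' T) = 1)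
    {f : ℝ → ℝ} (hf : ∀ z ∈ T, f z ∈ S) {B : Set Ω}
    (hB : ∀ ω, X ω ∈ S → X ω ≠ f (Z ω) → ω ∈ B) :
    finEntropy μ X S - finEntropy μ Z T ≤ #S * (μ.real B + 2 * √(μ.real B)) := by
  set J : ℝ → ℝ → ℝ := fun x z => μ.real (X ⁻¹' {x} ∩ Z ⁻¹' {z})
  have hX_marg : ∀ x, ∑ z ∈ T, J x z = μ.real (X ⁻¹' {x}) := fun x =>
    sum_measureReal_inter_preimage_singleton hZ hT _
  have hZ_marg : ∀ z, ∑ x ∈ S, J x z = μ.real (Z ⁻¹' {z}) := fun z => by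
    simp only [J, Set.inter_comm (X ⁻¹' _)]
    exact sum_measureReal_inter_preimage_singleton hX hS _
  have hJ1 : ∑ x ∈ S, ∑ z ∈ T, J x z ≤ 1 := by
    simpa [hX_marg] using (sum_measureReal_inter_preimage_singleton hX hS Set.univ).le
  have herr : ∑ z ∈ T, ∑ x ∈ S.erase (f z), J x z ≤ μ.real B :=
    calc ∑ z ∈ T, ∑ x ∈ S.erase (f z), J x z ≤ ∑ z ∈ T, μ.real (Z ⁻¹' {z} ∩ B) := by
          refine sum_le_sum fun z _ => ?_
          rw [sum_measureReal_preimage_singleton_inter hX]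
          refine measureReal_mono fun ω ⟨hxS, hzω⟩ => ⟨hzω, hB ω (mem_of_mem_erase hxS) ?_⟩
          rw [Set.eq_of_mem_singleton hzω]
          exact ne_of_mem_erase hxS
      _ = μ.real (Z ⁻¹' T ∩ B) := sum_measureReal_preimage_singleton_inter hZ T B
      _ ≤ μ.real B := measureReal_mono Set.inter_subset_right
  calc finEntropy μ X S - finEntropy μ Z T
      = ∑ x ∈ S, negMulLog (∑ z ∈ T, J x z) - ∑ z ∈ T, negMulLog (∑ x ∈ S, J x z) := by
        simp only [hX_marg, hZ_marg]; rfl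
    _ ≤ #S * ((∑ z ∈ T, ∑ x ∈ S.erase (f z), J x z) +
          2 * √(∑ z ∈ T, ∑ x ∈ S.erase (f z), J x z)) :=
        sum_negMulLog_sub_sum_negMulLog_le S T f (fun _ _ _ _ => measureReal_nonneg) hJ1 hf
    _ ≤ #S * (μ.real B + 2 * √(μ.real B)) := by gcongr

theorem finEntropy_sub_le_of_separated [IsProbabilityMeasure μ] {X Z : Ω → ℝ}
    {S T : Finset ℝ} (hX : Measurable X) (hZ : Measurable Z) (hS : μ (X ⁻¹' S) = 1)
    (hT : μ (Z ⁻¹' T) = 1) (hXL2 : MemLp X 2 μ) (hvar : 0 < variance X μ) {ε : ℝ} (hε : 0 < ε)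
    (hsep : ∀ x ∈ S, ∀ y ∈ S, x ≠ y →
      2 * ε ≤ |x / √(variance X μ) - y / √(variance X μ)|) :
    finEntropy μ X S - finEntropy μ Z T ≤
      #S * (nuScalar μ X Z / ε ^ 2 + 2 * √(nuScalar μ X Z / ε ^ 2)) := by
  have hσ : 0 < √(variance X μ) := sqrt_pos.2 hvar
  have hSne : S.Nonempty := by
    rw [nonempty_iff_ne_empty]
    rintro rfl
    simp at hS
  have hsep' : ∀ x ∈ S, ∀ y ∈ S, x ≠ y → 2 * (ε * √(variance X μ)) ≤ dist x y := by
    intro x hx y hy hxy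
    have := hsep x hx y hy hxy
    rwa [div_sub_div_same, abs_div, abs_of_pos hσ, le_div_iff₀ hσ, mul_assoc,
      ← Real.dist_eq] at this
  obtain ⟨g, hg⟩ := exists_condMean_eq_comp μ X Z
  obtain ⟨f, hfS, hf⟩ := exists_decoder_of_separated (S := (S : Set ℝ)) hSne hsep' g
  set B := {ω | ε ^ 2 * variance X μ ≤ (X ω - condMean μ X Z ω) ^ 2}
  have hB : ∀ ω, X ω ∈ S → X ω ≠ f (Z ω) → ω ∈ B := by
    intro ω hxS hne
    by_contra! hlt
    refine hne (hf (Z ω) (X ω) hxS ?_).symm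
    rw [Real.dist_eq, ← Function.comp_apply (f := g), ← hg]
    refine abs_lt_of_sq_lt_sq ?_ (by positivity)
    rw [mul_pow, sq_sqrt hvar.le]
    exact not_le.1 hlt
  calc finEntropy μ X S - finEntropy μ Z T ≤ #S * (μ.real B + 2 * √(μ.real B)) :=
        finEntropy_sub_le_of_decoder hX hZ hS hT (fun z _ => hfS z) hB
    _ ≤ _ := by gcongr <;> exact measureReal_le_nuScalar_div Z hXL2 hvar hε

theorem exists_tendsto_zero_finEntropy_sub_le [IsProbabilityMeasure μ] {X Z : ℕ → Ω → ℝ}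
    {S T : ℕ → Finset ℝ} {K : ℕ} (hX : ∀ n, Measurable (X n)) (hZ : ∀ n, Measurable (Z n))
    (hK : ∀ n, #(S n) ≤ K) (hS : ∀ n, μ (X n ⁻¹' S n) = 1) (hT : ∀ n, μ (Z n ⁻¹' T n) = 1)
    (hXL2 : ∀ n, MemLp (X n) 2 μ) (hvar : ∀ n, 0 < variance (X n) μ) {ε : ℝ} (hε : 0 < ε)
    (hsep : ∀ n, ∀ x ∈ S n, ∀ y ∈ S n, x ≠ y →
      2 * ε ≤ |x / √(variance (X n) μ) - y / √(variance (X n) μ)|)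
    (hν : Tendsto (fun n => nuScalar μ (X n) (Z n)) atTop (nhds 0)) :
    ∃ u : ℕ → ℝ, Tendsto u atTop (nhds 0) ∧
      ∀ n, finEntropy μ (X n) (S n) - finEntropy μ (Z n) (T n) ≤ u n := by
  have hcont : Continuous fun t : ℝ => K * (t / ε ^ 2 + 2 * √(t / ε ^ 2)) := by fun_prop
  refine ⟨_, (hcont.tendsto' 0 0 (by simp)).comp hν, fun n => ?_⟩
  have := nuScalar_nonneg μ (X n) (Z n)
  refine (finEntropy_sub_le_of_separated (hX n) (hZ n) (hS n) (hT n) (hXL2 n) (hvar n) hε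
    (hsep n)).trans ?_
  simp only [Function.comp_apply]
  gcongr
  exact_mod_cast hK n

end Measure

theorem stmt_2_general
    {Ω : Type*} [MeasurableSpace Ω] (μ : Measure Ω) [IsProbabilityMeasure μ]
    (X Z : ℕ → Ω → ℝ) (S T : ℕ → Finset ℝ) (K : ℕ)
    (hXmeas : ∀ n, Measurable (X n)) (hZmeas : ∀ n, Measurable (Z n))
    -- the support of `Xₙ` is the finite set `𝒳ₙ = S n`, with `2 ≤ |𝒳ₙ| ≤ K`
    (hKS : ∀ n, (S n).card ≤ K)
    (hsuppS : ∀ n, μ (X n ⁻¹' ↑(S n)) = 1)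
    -- the support of `Zₙ` is the finite set `𝒵ₙ = T n`, with `2 ≤ |𝒵ₙ| ≤ K`
    (hKT : ∀ n, (T n).card ≤ K)
    (hsuppT : ∀ n, μ (Z n ⁻¹' ↑(T n)) = 1)
    -- finite positive variances
    (hXL2 : ∀ n, MemLp (X n) 2 μ) (hXvar : ∀ n, 0 < variance (X n) μ)
    (hZL2 : ∀ n, MemLp (Z n) 2 μ) (hZvar : ∀ n, 0 < variance (Z n) μ)
    -- pairwise separations of standardized supports uniformly bounded below
    (hsepS : ∃ ε : ℝ, 0 < ε ∧ ∀ n, ∀ x ∈ S n, ∀ y ∈ S n, x ≠ y →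
      2 * ε ≤ |x / Real.sqrt (variance (X n) μ) - y / Real.sqrt (variance (X n) μ)|)
    (hsepT : ∃ ε : ℝ, 0 < ε ∧ ∀ n, ∀ x ∈ T n, ∀ y ∈ T n, x ≠ y →
      2 * ε ≤ |x / Real.sqrt (variance (Z n) μ) - y / Real.sqrt (variance (Z n) μ)|) :
    Tendsto (fun n => finEntropy μ (X n) (S n) - finEntropy μ (Z n) (T n)) atTop (nhds 0) ∨
    ¬ (Tendsto (fun n => nuScalar μ (X n) (Z n)) atTop (nhds 0) ∧
       Tendsto (fun n => nuScalar μ (Z n) (X n)) atTop (nhds 0)) := by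
  rw [or_iff_not_imp_right, not_not]
  rintro ⟨hXZ, hZX⟩
  obtain ⟨ε₁, hε₁, hsep₁⟩ := hsepS
  obtain ⟨ε₂, hε₂, hsep₂⟩ := hsepT
  obtain ⟨u, hu, hupper⟩ := exists_tendsto_zero_finEntropy_sub_le hXmeas hZmeas hKS hsuppS
    hsuppT hXL2 hXvar hε₁ hsep₁ hXZ
  obtain ⟨v, hv, hlower⟩ := exists_tendsto_zero_finEntropy_sub_le hZmeas hXmeas hKT hsuppT
    hsuppS hZL2 hZvar hε₂ hsep₂ hZX
  refine tendsto_of_tendsto_of_tendsto_of_le_of_le (by simpa using hv.neg) hu (fun n => ?_) hupper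
  linarith [hlower n]

/-- corollary to Theorem 2 of the paper. If both `Xₙ` and `Zₙ` have
finite supports (cardinalities in `[2, K]`, finite positive variances), the standardized
supports of both have pairwise separations uniformly bounded below by a positive constant,
and the conditional mean functions `mₙ(x) = E[Zₙ V[Zₙ]^{-1/2} | Xₙ = x]` are one-to-one on
the support of `Xₙ`, then either `H(Xₙ) − H(Zₙ) → 0`, or `ν(Xₙ|Zₙ)` and `ν(Zₙ|Xₙ)` do not
both converge to zero. -/
theorem stmt_2
    {Ω : Type*} [MeasurableSpace Ω] (μ : Measure Ω) [IsProbabilityMeasure μ]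
    (X Z : ℕ → Ω → ℝ) (S T : ℕ → Finset ℝ) (K : ℕ)
    (m : ℕ → ℝ → ℝ)
    (hXmeas : ∀ n, Measurable (X n)) (hZmeas : ∀ n, Measurable (Z n))
    -- the support of `Xₙ` is the finite set `𝒳ₙ = S n`, with `2 ≤ |𝒳ₙ| ≤ K`
    (hcardS : ∀ n, 2 ≤ (S n).card) (hKS : ∀ n, (S n).card ≤ K)
    (hsuppS : ∀ n, μ (X n ⁻¹' ↑(S n)) = 1)
    (hatomS : ∀ n, ∀ x ∈ S n, μ (X n ⁻¹' {x}) ≠ 0)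
    -- the support of `Zₙ` is the finite set `𝒵ₙ = T n`, with `2 ≤ |𝒵ₙ| ≤ K`
    (hcardT : ∀ n, 2 ≤ (T n).card) (hKT : ∀ n, (T n).card ≤ K)
    (hsuppT : ∀ n, μ (Z n ⁻¹' ↑(T n)) = 1)
    (hatomT : ∀ n, ∀ z ∈ T n, μ (Z n ⁻¹' {z}) ≠ 0)
    -- finite positive variances
    (hXL2 : ∀ n, MemLp (X n) 2 μ) (hXvar : ∀ n, 0 < variance (X n) μ)
    (hZL2 : ∀ n, MemLp (Z n) 2 μ) (hZvar : ∀ n, 0 < variance (Z n) μ)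
    -- pairwise separations of standardized supports uniformly bounded below
    (hsepS : ∃ ε : ℝ, 0 < ε ∧ ∀ n, ∀ x ∈ S n, ∀ y ∈ S n, x ≠ y →
      2 * ε ≤ |x / Real.sqrt (variance (X n) μ) - y / Real.sqrt (variance (X n) μ)|)
    (hsepT : ∃ ε : ℝ, 0 < ε ∧ ∀ n, ∀ x ∈ T n, ∀ y ∈ T n, x ≠ y →
      2 * ε ≤ |x / Real.sqrt (variance (Z n) μ) - y / Real.sqrt (variance (Z n) μ)|)
    -- `mₙ(x) = E[Zₙ V[Zₙ]^{-1/2} | Xₙ = x]` is one-to-one on the support of `Xₙ`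
    (hm : ∀ n, (fun ω => m n (X n ω)) =ᵐ[μ]
      condMean μ (fun ω => Z n ω / Real.sqrt (variance (Z n) μ)) (X n))
    (hinj : ∀ n, Set.InjOn (m n) ↑(S n)) :
    Tendsto (fun n => finEntropy μ (X n) (S n) - finEntropy μ (Z n) (T n)) atTop (nhds 0) ∨
    ¬ (Tendsto (fun n => nuScalar μ (X n) (Z n)) atTop (nhds 0) ∧
       Tendsto (fun n => nuScalar μ (Z n) (X n)) atTop (nhds 0)) :=
  stmt_2_general μ X Z S T K hXmeas hZmeas hKS hsuppS hKT hsuppT hXL2 hXvar hZL2 hZvar hsepS hsepT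
end
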